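/- Let (Ω, F, μ) be a measure space, let 1 < p ≤ 2, and let f, g : Ω → ℂ with f, g ∈ L^p(μ). Then the function t ↦ ‖f + t·g‖_p² − (p−1)·t²·‖g‖_p² is convex on ℝ. -/

import Mathlib

/-!
The key estimate is the uniform 2-smoothness of `L^p` for `1 ≤ p ≤ 2`:
`‖u‖² + (p - 1) ‖v‖² ≤ (‖u + v‖² + ‖u - v‖²) / 2`. Applied to `u = f + ((x + y) / 2) g` and
`v = ((x - y) / 2) g` it says exactly that the function is midpoint convex; being continuous, it is
convex. The smoothness inequality is the integrated form of the two-point inequality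
`(|x|² + (p - 1) |y|²) ^ (p / 2) ≤ (|x + y| ^ p + |x - y| ^ p) / 2`: on the left one uses the
reverse Minkowski inequality in `L^(p/2)`, on the right the convexity of `s ↦ s ^ (2 / p)`.
By Cauchy–Schwarz the two-point inequality reduces to real scalars, where it is a calculus exercise.
-/

open Real Set MeasureTheory

theorem two_mul_mul_le_one_add_rpow_sub_one_sub_rpow {q r : ℝ} (hq0 : 0 ≤ q) (hq1 : q ≤ 1)
    (hr0 : 0 ≤ r) (hr1 : r ≤ 1) :
    2 * q * r ≤ (1 + r) ^ q - (1 - r) ^ q := by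
  let G : ℝ → ℝ := fun t => (1 + t) ^ q - (1 - t) ^ q - 2 * q * t
  have hG : ∀ t ∈ Ioo (0 : ℝ) 1,
      HasDerivAt G (q * (1 + t) ^ (q - 1) + q * (1 - t) ^ (q - 1) - 2 * q) t := by
    intro t ⟨ht0, ht1⟩
    have h₁ := ((hasDerivAt_id' t).const_add 1).rpow_const (p := q) (.inl (by linarith))
    have h₂ := ((hasDerivAt_id' t).const_sub 1).rpow_const (p := q) (.inl (by linarith))
    exact ((h₁.sub h₂).sub ((hasDerivAt_id' t).const_mul (2 * q))).congr_deriv (by ring)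
  have hG' : ∀ t ∈ Ioo (0 : ℝ) 1, 0 ≤ q * (1 + t) ^ (q - 1) + q * (1 - t) ^ (q - 1) - 2 * q := by
    intro t ⟨ht0, ht1⟩
    -- the two powers have product `(1 - t²)^(q - 1) ≥ 1`, hence sum at least `2`
    have ha := rpow_pos_of_pos (by linarith : (0 : ℝ) < 1 + t) (q - 1)
    have hb := rpow_pos_of_pos (by linarith : (0 : ℝ) < 1 - t) (q - 1)
    have hab : 1 ≤ (1 + t) ^ (q - 1) * (1 - t) ^ (q - 1) := by
      rw [← mul_rpow (by linarith) (by linarith)]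
      exact one_le_rpow_of_pos_of_le_one_of_nonpos (by nlinarith) (by nlinarith) (by linarith)
    nlinarith [sq_nonneg ((1 + t) ^ (q - 1) - (1 - t) ^ (q - 1))]
  have hcont : Continuous G := by
    have := continuous_rpow_const hq0
    fun_prop
  have hmono := monotoneOn_of_hasDerivWithinAt_nonneg (convex_Icc 0 1) hcont.continuousOn
    (by simpa using fun t ht => (hG t ht).hasDerivWithinAt) (by simpa using hG')
  have := hmono (left_mem_Icc.2 zero_le_one) ⟨hr0, hr1⟩ hr0
  norm_num [G] at this
  linarith

theorem one_add_mul_sq_rpow_le {p r : ℝ} (hp1 : 1 ≤ p) (hp2 : p ≤ 2) (hr0 : 0 ≤ r) (hr1 : r ≤ 1) :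
    (1 + (p - 1) * r ^ 2) ^ (p / 2) ≤ ((1 + r) ^ p + (1 - r) ^ p) / 2 := by
  let Ψ : ℝ → ℝ := fun t => ((1 + t) ^ p + (1 - t) ^ p) / 2 - (1 + (p - 1) * t ^ 2) ^ (p / 2)
  have hΨ : ∀ t ∈ Ioo (0 : ℝ) 1, HasDerivAt Ψ
      (p / 2 * ((1 + t) ^ (p - 1) - (1 - t) ^ (p - 1))
        - p * (p - 1) * t * (1 + (p - 1) * t ^ 2) ^ (p / 2 - 1)) t := by
    intro t ⟨ht0, ht1⟩
    have h₁ := ((hasDerivAt_id' t).const_add 1).rpow_const (p := p) (.inl (by linarith))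
    have h₂ := ((hasDerivAt_id' t).const_sub 1).rpow_const (p := p) (.inl (by linarith))
    have h₃ := (((hasDerivAt_pow 2 t).const_mul (p - 1)).const_add 1).rpow_const (p := p / 2)
      (.inl (by positivity))
    exact (((h₁.add h₂).div_const 2).sub h₃).congr_deriv (by push_cast; ring)
  have hΨ' : ∀ t ∈ Ioo (0 : ℝ) 1, 0 ≤ p / 2 * ((1 + t) ^ (p - 1) - (1 - t) ^ (p - 1))
        - p * (p - 1) * t * (1 + (p - 1) * t ^ 2) ^ (p / 2 - 1) := by
    intro t ⟨ht0, ht1⟩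
    have hodd := two_mul_mul_le_one_add_rpow_sub_one_sub_rpow (q := p - 1) (by linarith)
      (by linarith) ht0.le ht1.le
    have hle : (1 + (p - 1) * t ^ 2) ^ (p / 2 - 1) ≤ 1 :=
      rpow_le_one_of_one_le_of_nonpos (by nlinarith) (by linarith)
    have hpt : 0 ≤ p * (p - 1) * t := mul_nonneg (mul_nonneg (by linarith) (by linarith)) ht0.le
    nlinarith [mul_le_mul_of_nonneg_left hle hpt]
  have hcont : Continuous Ψ := by
    have := continuous_rpow_const (by linarith : 0 ≤ p)
    have := continuous_rpow_const (by linarith : 0 ≤ p / 2)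
    fun_prop
  have hmono := monotoneOn_of_hasDerivWithinAt_nonneg (convex_Icc 0 1) hcont.continuousOn
    (by simpa using fun t ht => (hΨ t ht).hasDerivWithinAt) (by simpa using hΨ')
  have := hmono (left_mem_Icc.2 zero_le_one) ⟨hr0, hr1⟩ hr0
  norm_num [Ψ] at this
  linarith

theorem sq_rpow_div_two {x : ℝ} (hx : 0 ≤ x) (p : ℝ) : (x ^ 2) ^ (p / 2) = x ^ p := by
  rw [← rpow_natCast, ← rpow_mul hx]
  ring_nf

theorem sq_add_mul_sq_rpow_le {p m n : ℝ} (hp1 : 1 ≤ p) (hp2 : p ≤ 2) (hn : 0 ≤ n) (hnm : n ≤ m) :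
    (m ^ 2 + (p - 1) * n ^ 2) ^ (p / 2) ≤ ((m + n) ^ p + (m - n) ^ p) / 2 := by
  obtain rfl | hm := (hn.trans hnm).eq_or_lt
  · obtain rfl : n = 0 := le_antisymm hnm hn
    simp [zero_rpow (by linarith : p ≠ 0), zero_rpow (by linarith : p / 2 ≠ 0)]
  have hr1 : n / m ≤ 1 := (div_le_one hm).2 hnm
  calc (m ^ 2 + (p - 1) * n ^ 2) ^ (p / 2)
      = (m ^ 2 * (1 + (p - 1) * (n / m) ^ 2)) ^ (p / 2) := by congr 1; field_simp
    _ = m ^ p * (1 + (p - 1) * (n / m) ^ 2) ^ (p / 2) := by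
        rw [mul_rpow (by positivity) (by nlinarith), sq_rpow_div_two hm.le]
    _ ≤ m ^ p * (((1 + n / m) ^ p + (1 - n / m) ^ p) / 2) := by
        gcongr; exact one_add_mul_sq_rpow_le hp1 hp2 (by positivity) hr1
    _ = ((m * (1 + n / m)) ^ p + (m * (1 - n / m)) ^ p) / 2 := by
        rw [mul_rpow hm.le (by positivity), mul_rpow hm.le (by linarith)]; ring
    _ = ((m + n) ^ p + (m - n) ^ p) / 2 := by field_simp

theorem norm_sq_add_mul_norm_sq_rpow_le {E : Type*} [NormedAddCommGroup E] [InnerProductSpace ℝ E]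
    {p : ℝ} (hp1 : 1 ≤ p) (hp2 : p ≤ 2) (x y : E) :
    (‖x‖ ^ 2 + (p - 1) * ‖y‖ ^ 2) ^ (p / 2) ≤ (‖x + y‖ ^ p + ‖x - y‖ ^ p) / 2 := by
  wlog hxy : ‖x - y‖ ≤ ‖x + y‖ generalizing y
  · have := this (-y) (by simpa [← sub_eq_add_neg] using (not_le.1 hxy).le)
    simpa [← sub_eq_add_neg, add_comm] using this
  have hcs : ‖x‖ ^ 2 - ‖y‖ ^ 2 ≤ ‖x + y‖ * ‖x - y‖ := by
    have := real_inner_le_norm (x + y) (x - y)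
    rw [inner_add_left, inner_sub_right, inner_sub_right, real_inner_self_eq_norm_sq,
      real_inner_self_eq_norm_sq, real_inner_comm x y] at this
    linarith
  have hpar := norm_add_sq_real x y
  have hpar' := norm_sub_sq_real x y
  -- with `a = ‖x + y‖`, `b = ‖x - y‖`, both sides equal `p (a² + b²) / 4 + (2 - p) c / 2`,
  -- where `c = ‖x‖² - ‖y‖²` on the left and `c = a b` on the right
  have hbase : ‖x‖ ^ 2 + (p - 1) * ‖y‖ ^ 2
      ≤ ((‖x + y‖ + ‖x - y‖) / 2) ^ 2 + (p - 1) * ((‖x + y‖ - ‖x - y‖) / 2) ^ 2 := by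
    nlinarith
  calc (‖x‖ ^ 2 + (p - 1) * ‖y‖ ^ 2) ^ (p / 2)
      ≤ (((‖x + y‖ + ‖x - y‖) / 2) ^ 2 + (p - 1) * ((‖x + y‖ - ‖x - y‖) / 2) ^ 2) ^ (p / 2) := by
        gcongr
    _ ≤ _ := sq_add_mul_sq_rpow_le hp1 hp2 (by linarith) (by linarith [norm_nonneg (x - y)])
    _ = (‖x + y‖ ^ p + ‖x - y‖ ^ p) / 2 := by ring_nf

theorem rpow_one_sub_mul_rpow_add_le {s a b x y : ℝ} (hs0 : 0 ≤ s) (hs1 : s ≤ 1) (ha : 0 < a)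
    (hb : 0 < b) (hx : 0 ≤ x) (hy : 0 ≤ y) :
    a ^ (1 - s) * x ^ s + b ^ (1 - s) * y ^ s ≤ (a + b) ^ (1 - s) * (x + y) ^ s := by
  have hab : 0 < a + b := add_pos ha hb
  -- in perspective form this is the concavity of `z ↦ z ^ s`
  have hperspective : ∀ c z : ℝ, 0 < c → 0 ≤ z → c ^ (1 - s) * z ^ s = c * (z / c) ^ s := by
    intro c z hc hz
    rw [div_rpow hz hc.le, rpow_sub hc, rpow_one]
    field_simp
  have hconc := (concaveOn_rpow hs0 hs1).2 (mem_Ici.2 (div_nonneg hx ha.le))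
    (mem_Ici.2 (div_nonneg hy hb.le)) (div_nonneg ha.le hab.le) (div_nonneg hb.le hab.le)
    (by field_simp)
  have hmix : a / (a + b) * (x / a) + b / (a + b) * (y / b) = (x + y) / (a + b) := by
    field_simp
  simp only [smul_eq_mul, hmix] at hconc
  rw [hperspective a x ha hx, hperspective b y hb hy, hperspective _ _ hab (add_nonneg hx hy)]
  calc a * (x / a) ^ s + b * (y / b) ^ s
      = (a + b) * (a / (a + b) * (x / a) ^ s + b / (a + b) * (y / b) ^ s) := by field_simp
    _ ≤ (a + b) * ((x + y) / (a + b)) ^ s := by gcongr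

theorem add_div_two_rpow_le {a b r : ℝ} (ha : 0 ≤ a) (hb : 0 ≤ b) (hr : 1 ≤ r) :
    ((a + b) / 2) ^ r ≤ (a ^ r + b ^ r) / 2 := by
  have := (convexOn_rpow hr).2 (mem_Ici.2 ha) (mem_Ici.2 hb) (by norm_num : (0 : ℝ) ≤ 1 / 2)
    (by norm_num : (0 : ℝ) ≤ 1 / 2) (by norm_num)
  simp only [smul_eq_mul] at this
  calc ((a + b) / 2) ^ r = (1 / 2 * a + 1 / 2 * b) ^ r := by ring_nf
    _ ≤ 1 / 2 * a ^ r + 1 / 2 * b ^ r := this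
    _ = (a ^ r + b ^ r) / 2 := by ring

theorem nonpos_of_midpoint_le {ψ : ℝ → ℝ} (hc : Continuous ψ) (h0 : ψ 0 ≤ 0) (h1 : ψ 1 ≤ 0)
    (hmid : ∀ a b, ψ ((a + b) / 2) ≤ (ψ a + ψ b) / 2) {t : ℝ} (ht : t ∈ Icc (0 : ℝ) 1) :
    ψ t ≤ 0 := by
  obtain ⟨c, hc01, hmax⟩ :=
    isCompact_Icc.exists_isMaxOn (nonempty_Icc.2 zero_le_one) hc.continuousOn
  by_contra! hpos
  have hcpos : 0 < ψ c := hpos.trans_le (hmax ht)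
  -- the leftmost maximiser `t₀` lies inside `(0, 1)` and cannot be the midpoint of two points
  -- of `[0, 1]`, one of which is further left
  set K := Icc (0 : ℝ) 1 ∩ ψ ⁻¹' {ψ c}
  have hKbdd : BddBelow K := ⟨0, fun x hx => hx.1.1⟩
  have ht₀ : sInf K ∈ K :=
    (isClosed_Icc.inter (isClosed_singleton.preimage hc)).csInf_mem ⟨c, hc01, rfl⟩ hKbdd
  set t₀ := sInf K
  obtain ⟨⟨ht₀0, ht₀1⟩, ht₀c : ψ t₀ = ψ c⟩ := ht₀
  have hpos0 : 0 < t₀ := ht₀0.lt_of_ne fun h => by rw [← h] at ht₀c; linarith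
  have hpos1 : t₀ < 1 := ht₀1.lt_of_ne fun h => by rw [h] at ht₀c; linarith
  set δ := min t₀ (1 - t₀)
  have hδ : 0 < δ := lt_min hpos0 (by linarith)
  have hδ0 : δ ≤ t₀ := min_le_left _ _
  have hδ1 : δ ≤ 1 - t₀ := min_le_right _ _
  have hleft : ψ (t₀ - δ) < ψ c := by
    refine (hmax ⟨by linarith, by linarith⟩).lt_of_ne fun heq => ?_
    have : t₀ ≤ t₀ - δ := csInf_le hKbdd ⟨⟨by linarith, by linarith⟩, heq⟩
    linarith
  have hright : ψ (t₀ + δ) ≤ ψ c := hmax ⟨by linarith, by linarith⟩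
  have := hmid (t₀ - δ) (t₀ + δ)
  rw [show (t₀ - δ + (t₀ + δ)) / 2 = t₀ by ring] at this
  linarith

theorem convexOn_univ_of_midpoint_le {φ : ℝ → ℝ} (hc : Continuous φ)
    (hmid : ∀ x y, φ ((x + y) / 2) ≤ (φ x + φ y) / 2) : ConvexOn ℝ univ φ := by
  refine ⟨convex_univ, fun x _ y _ a b _ hb hab => ?_⟩
  let ψ : ℝ → ℝ := fun t => φ (x + t * (y - x)) - (φ x + t * (φ y - φ x))
  have hψ : ψ b ≤ 0 := by
    refine nonpos_of_midpoint_le (by fun_prop) (by simp [ψ]) (by simp [ψ]) (fun s t => ?_)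
      ⟨hb, by linarith⟩
    have := hmid (x + s * (y - x)) (x + t * (y - x))
    simp only [ψ]
    rw [show x + (s + t) / 2 * (y - x) = (x + s * (y - x) + (x + t * (y - x))) / 2 by ring]
    linarith
  obtain rfl : a = 1 - b := by linarith
  rw [smul_eq_mul, smul_eq_mul, smul_eq_mul, smul_eq_mul,
    show (1 - b) * x + b * y = x + b * (y - x) by ring]
  linarith

section

variable {Ω E : Type*} [MeasurableSpace Ω] {μ : Measure Ω} [NormedAddCommGroup E]

theorem integral_Lp_add_ge_of_le_one {F G : Ω → ℝ} {s : ℝ} (hs0 : 0 < s) (hs1 : s ≤ 1)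
    (hF : 0 ≤ F) (hG : 0 ≤ G)
    (hFi : Integrable (fun ω => F ω ^ s) μ) (hGi : Integrable (fun ω => G ω ^ s) μ)
    (hFGi : Integrable (fun ω => (F ω + G ω) ^ s) μ) :
    (∫ ω, F ω ^ s ∂μ) ^ s⁻¹ + (∫ ω, G ω ^ s ∂μ) ^ s⁻¹ ≤ (∫ ω, (F ω + G ω) ^ s ∂μ) ^ s⁻¹ := by
  have hIF : 0 ≤ ∫ ω, F ω ^ s ∂μ := integral_nonneg fun ω => rpow_nonneg (hF ω) s
  have hIG : 0 ≤ ∫ ω, G ω ^ s ∂μ := integral_nonneg fun ω => rpow_nonneg (hG ω) s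
  have hIFG : 0 ≤ ∫ ω, (F ω + G ω) ^ s ∂μ :=
    integral_nonneg fun ω => rpow_nonneg (add_nonneg (hF ω) (hG ω)) s
  have hmono : ∀ H : Ω → ℝ, 0 ≤ H → H ≤ F + G → Integrable (fun ω => H ω ^ s) μ →
      (∫ ω, H ω ^ s ∂μ) ^ s⁻¹ ≤ (∫ ω, (F ω + G ω) ^ s ∂μ) ^ s⁻¹ := fun H hH hHFG hHi => by
    refine rpow_le_rpow (integral_nonneg fun ω => rpow_nonneg (hH ω) s) ?_ (inv_nonneg.2 hs0.le)
    exact integral_mono hHi hFGi fun ω => rpow_le_rpow (hH ω) (hHFG ω) hs0.le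
  set L := (∫ ω, F ω ^ s ∂μ) ^ s⁻¹
  set M := (∫ ω, G ω ^ s ∂μ) ^ s⁻¹
  obtain hL | hL := (rpow_nonneg hIF s⁻¹ : 0 ≤ L).eq_or_lt
  · rw [show L = 0 from hL.symm, zero_add]
    exact hmono G hG (le_add_of_nonneg_left hF) hGi
  obtain hM | hM := (rpow_nonneg hIG s⁻¹ : 0 ≤ M).eq_or_lt
  · rw [show M = 0 from hM.symm, add_zero]
    exact hmono F hF (le_add_of_nonneg_right hG) hFi
  have hself : ∀ c : ℝ, 0 ≤ c → c ^ (1 - s) * c ^ s = c := fun c hc => by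
    rw [← rpow_add' hc (by simp), sub_add_cancel, rpow_one]
  have hint : L + M ≤ (L + M) ^ (1 - s) * ∫ ω, (F ω + G ω) ^ s ∂μ := by
    calc L + M = L ^ (1 - s) * ∫ ω, F ω ^ s ∂μ + M ^ (1 - s) * ∫ ω, G ω ^ s ∂μ := by
          rw [← rpow_inv_rpow hIF hs0.ne', ← rpow_inv_rpow hIG hs0.ne', hself L hL.le,
            hself M hM.le]
      _ = ∫ ω, (L ^ (1 - s) * F ω ^ s + M ^ (1 - s) * G ω ^ s) ∂μ := by
          rw [integral_add (hFi.const_mul _) (hGi.const_mul _), integral_const_mul,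
            integral_const_mul]
      _ ≤ ∫ ω, (L + M) ^ (1 - s) * (F ω + G ω) ^ s ∂μ :=
          integral_mono ((hFi.const_mul _).add (hGi.const_mul _)) (hFGi.const_mul _) fun ω =>
            rpow_one_sub_mul_rpow_add_le hs0.le hs1 hL hM (hF ω) (hG ω)
      _ = (L + M) ^ (1 - s) * ∫ ω, (F ω + G ω) ^ s ∂μ := integral_const_mul _ _
  have hLM : 0 < L + M := add_pos hL hM
  rw [le_rpow_inv_iff_of_pos hLM.le hIFG hs0]
  nth_rw 1 [← hself (L + M) hLM.le] at hint
  exact le_of_mul_le_mul_left hint (rpow_pos_of_pos hLM _)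

theorem MeasureTheory.MemLp.integrable_norm_sq_rpow {p : ℝ} (hp : 0 < p) {u : Ω → E}
    (hu : MemLp u (ENNReal.ofReal p) μ) :
    Integrable (fun ω => (‖u ω‖ ^ 2) ^ (p / 2)) μ := by
  simpa [sq_rpow_div_two, hp.le] using
    hu.integrable_norm_rpow (by simpa using hp) ENNReal.ofReal_ne_top

theorem MeasureTheory.MemLp.toReal_eLpNorm_sq {p : ℝ} (hp : 0 < p) {u : Ω → E}
    (hu : MemLp u (ENNReal.ofReal p) μ) :
    (eLpNorm u (ENNReal.ofReal p) μ).toReal ^ 2 = (∫ ω, (‖u ω‖ ^ 2) ^ (p / 2) ∂μ) ^ (p / 2)⁻¹ := by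
  have hI : 0 ≤ ∫ ω, ‖u ω‖ ^ p ∂μ := integral_nonneg fun ω => by positivity
  rw [hu.eLpNorm_eq_integral_rpow_norm (by simpa using hp) ENNReal.ofReal_ne_top,
    ENNReal.toReal_ofReal hp.le, ENNReal.toReal_ofReal (by positivity), ← rpow_natCast,
    ← rpow_mul hI]
  simp only [sq_rpow_div_two (norm_nonneg _)]
  congr 1
  push_cast
  field_simp

theorem toReal_eLpNorm_sq_add_mul_sq_le [InnerProductSpace ℝ E] {p : ℝ} (hp1 : 1 ≤ p) (hp2 : p ≤ 2)
    {u v : Ω → E}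
    (hu : MemLp u (ENNReal.ofReal p) μ) (hv : MemLp v (ENNReal.ofReal p) μ) :
    (eLpNorm u (ENNReal.ofReal p) μ).toReal ^ 2
        + (p - 1) * (eLpNorm v (ENNReal.ofReal p) μ).toReal ^ 2
      ≤ ((eLpNorm (u + v) (ENNReal.ofReal p) μ).toReal ^ 2
        + (eLpNorm (u - v) (ENNReal.ofReal p) μ).toReal ^ 2) / 2 := by
  have hp0 : 0 < p := by linarith
  have hs0 : 0 < p / 2 := by linarith
  have hc : 0 ≤ p - 1 := by linarith
  set F : Ω → ℝ := fun ω => ‖u ω‖ ^ 2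
  set G : Ω → ℝ := fun ω => (p - 1) * ‖v ω‖ ^ 2
  have hFi := hu.integrable_norm_sq_rpow hp0
  have hGi : Integrable (fun ω => G ω ^ (p / 2)) μ := by
    simpa only [G, mul_rpow hc (sq_nonneg _)] using (hv.integrable_norm_sq_rpow hp0).const_mul _
  have hAi := (hu.add hv).integrable_norm_sq_rpow hp0
  have hBi := (hu.sub hv).integrable_norm_sq_rpow hp0
  have hsumi := hAi.add hBi
  have htwo : ∀ ω, (F ω + G ω) ^ (p / 2)
      ≤ ((‖(u + v) ω‖ ^ 2) ^ (p / 2) + (‖(u - v) ω‖ ^ 2) ^ (p / 2)) / 2 := fun ω => by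
    simp only [F, G, Pi.add_apply, Pi.sub_apply, sq_rpow_div_two (norm_nonneg _)]
    exact norm_sq_add_mul_norm_sq_rpow_le hp1 hp2 (u ω) (v ω)
  have hFGi : Integrable (fun ω => (F ω + G ω) ^ (p / 2)) μ := by
    refine (hsumi.div_const 2).mono' ?_ (.of_forall fun ω => ?_)
    · have := continuous_rpow_const hs0.le
      exact this.comp_aestronglyMeasurable
        ((hu.1.norm.pow 2).add ((hv.1.norm.pow 2).const_mul _))
    · rw [norm_of_nonneg (by positivity)]
      exact htwo ω
  rw [hu.toReal_eLpNorm_sq hp0, hv.toReal_eLpNorm_sq hp0, (hu.add hv).toReal_eLpNorm_sq hp0,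
    (hu.sub hv).toReal_eLpNorm_sq hp0]
  calc (∫ ω, F ω ^ (p / 2) ∂μ) ^ (p / 2)⁻¹
        + (p - 1) * (∫ ω, (‖v ω‖ ^ 2) ^ (p / 2) ∂μ) ^ (p / 2)⁻¹
      = (∫ ω, F ω ^ (p / 2) ∂μ) ^ (p / 2)⁻¹ + (∫ ω, G ω ^ (p / 2) ∂μ) ^ (p / 2)⁻¹ := by
        simp only [G, mul_rpow hc (sq_nonneg _), integral_const_mul]
        rw [mul_rpow (by positivity) (integral_nonneg fun ω => by positivity),
          rpow_rpow_inv hc hs0.ne']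
    _ ≤ (∫ ω, (F ω + G ω) ^ (p / 2) ∂μ) ^ (p / 2)⁻¹ :=
        integral_Lp_add_ge_of_le_one hs0 (by linarith) (fun ω => by positivity)
          (fun ω => by positivity) hFi hGi hFGi
    _ ≤ ((∫ ω, (‖(u + v) ω‖ ^ 2) ^ (p / 2) ∂μ + ∫ ω, (‖(u - v) ω‖ ^ 2) ^ (p / 2) ∂μ) / 2)
          ^ (p / 2)⁻¹ := by
        rw [← integral_add hAi hBi, ← integral_div]
        exact rpow_le_rpow (integral_nonneg fun ω => by positivity)
          (integral_mono hFGi (hsumi.div_const 2) htwo) (by positivity)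
    _ ≤ _ := add_div_two_rpow_le (integral_nonneg fun ω => by positivity)
          (integral_nonneg fun ω => by positivity) (one_le_inv₀ hs0 |>.2 (by linarith))

theorem continuous_toReal_eLpNorm_add_smul [NormedSpace ℝ E] {q : ENNReal} {f g : Ω → E}
    (hq : 1 ≤ q)
    (hf : MemLp f q μ) (hg : MemLp g q μ) :
    Continuous fun t : ℝ => (eLpNorm (f + t • g) q μ).toReal := by
  have := Fact.mk hq
  have hLp : (fun t : ℝ => (eLpNorm (f + t • g) q μ).toReal)
      = fun t => ‖hf.toLp f + t • hg.toLp g‖ := by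
    funext t
    rw [← MemLp.toLp_const_smul, ← MemLp.toLp_add, Lp.norm_toLp]
  rw [hLp]
  fun_prop

theorem convexOn_toReal_eLpNorm_add_smul_sq_sub [InnerProductSpace ℝ E] {p : ℝ} (hp1 : 1 ≤ p)
    (hp2 : p ≤ 2) {f g : Ω → E} (hf : MemLp f (ENNReal.ofReal p) μ)
    (hg : MemLp g (ENNReal.ofReal p) μ) :
    ConvexOn ℝ univ fun t : ℝ => (eLpNorm (f + t • g) (ENNReal.ofReal p) μ).toReal ^ 2
      - (p - 1) * t ^ 2 * (eLpNorm g (ENNReal.ofReal p) μ).toReal ^ 2 := by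
  refine convexOn_univ_of_midpoint_le ?_ fun x y => ?_
  · have := continuous_toReal_eLpNorm_add_smul (ENNReal.one_le_ofReal.2 hp1) hf hg
    fun_prop
  have key := toReal_eLpNorm_sq_add_mul_sq_le hp1 hp2 (hf.add (hg.const_smul ((x + y) / 2)))
    (hg.const_smul ((x - y) / 2))
  rw [show f + ((x + y) / 2) • g + ((x - y) / 2) • g = f + x • g by module,
    show f + ((x + y) / 2) • g - ((x - y) / 2) • g = f + y • g by module, eLpNorm_const_smul,
    ENNReal.toReal_mul, toReal_enorm, norm_eq_abs, mul_pow, sq_abs] at key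
  linear_combination key

end

/-- Commutative case of the convexity statement in the proof of the Ball–Carlen–Lieb
inequality: for `1 < p ≤ 2` and `f, g ∈ L^p(μ)`, the function
`t ↦ ‖f + t·g‖_p² − (p−1)·t²·‖g‖_p²` is convex on `ℝ`. -/
theorem bcl_auxiliary_convexity {Ω : Type*} [MeasurableSpace Ω] (μ : Measure Ω)
    (p : ℝ) (hp1 : 1 < p) (hp2 : p ≤ 2) (f g : Ω → ℂ)
    (hf : MemLp f (ENNReal.ofReal p) μ) (hg : MemLp g (ENNReal.ofReal p) μ) :
    ConvexOn ℝ Set.univ (fun t : ℝ =>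
      (eLpNorm (fun ω => f ω + (t : ℂ) * g ω) (ENNReal.ofReal p) μ).toReal ^ 2
        - (p - 1) * t ^ 2 * (eLpNorm g (ENNReal.ofReal p) μ).toReal ^ 2) := by
  -- `(t : ℂ) * z` is `t • z` by definition (`Complex.real_smul` is `rfl`)
  exact convexOn_toReal_eLpNorm_add_smul_sq_sub hp1.le hp2 hf hg
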